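/- For 0 ≤ η ≤ 1, ε > 0, and k = 3.5, the joint PMF Υ(n₁,n₂,3.5) = (3.5^{3.5}/Γ(3.5)) · (η^{n₂}(1-η)^{n₁}/(n₁! n₂!)) · Γ(n₁+n₂+3.5)/(ε^{3.5}(1+3.5/ε)^{n₁+n₂+3.5}) sums to 1 over all (n₁,n₂) ∈ ℕ². -/

import Mathlib

/-!
With `q = ε / (ε + k)` and `1 + k / ε = (ε + k) / ε`, the term `Υ(n₁, n₂, k)` is
`(k / (ε + k)) ^ k / Γ(k)` times `Γ(n₁ + n₂ + k) x ^ n₁ / n₁! * y ^ n₂ / n₂!` with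
`x = (1 - η) q`, `y = η q`. Grouping the terms by `n = n₁ + n₂`, the binomial theorem turns the
double series into the negative binomial series `∑ Γ(n + k) / n! * t ^ n = Γ(k) (1 - t) ^ (-k)`
at `t = x + y = q`, and `1 - q = k / (ε + k)` cancels the prefactor.
-/

open Finset Real

theorem Ring.choose_add_natCast_sub_one {R : Type*} [Field R] [CharZero R] (s : R) (n : ℕ) :
    Ring.choose (s + n - 1) n = (ascPochhammer R n).eval s / n.factorial := by
  rw [← Ring.multichoose_eq, eq_div_iff (by exact_mod_cast n.factorial_ne_zero), mul_comm,
    ← nsmul_eq_mul, Ring.factorial_nsmul_multichoose_eq_ascPochhammer,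
    Polynomial.ascPochhammer_smeval_eq_eval]

theorem Real.Gamma_nat_add_eq_mul_ascPochhammer {s : ℝ} (hs : ∀ m : ℕ, s ≠ -m) (n : ℕ) :
    Gamma (n + s) = Gamma s * (ascPochhammer ℝ n).eval s := by
  induction n with
  | zero => simp
  | succ n ih =>
    have hns : (n : ℝ) + s ≠ 0 := fun h => hs n (by linarith)
    rw [Nat.cast_succ, add_right_comm, Gamma_add_one hns, ih, ascPochhammer_succ_eval]
    ring

theorem Real.hasSum_Gamma_nat_add_div_factorial_mul_pow {s x : ℝ} (hs : ∀ m : ℕ, s ≠ -m)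
    (hx : |x| < 1) :
    HasSum (fun n : ℕ => Gamma (n + s) / n.factorial * x ^ n) (Gamma s / (1 - x) ^ s) := by
  have hball : x ∈ Metric.eball (0 : ℝ) 1 := by
    simpa [Metric.mem_eball, edist_dist, Real.dist_eq] using hx
  have := ((one_div_one_sub_rpow_hasFPowerSeriesOnBall_zero s).hasSum hball).mul_left (Gamma s)
  simp only [FormalMultilinearSeries.ofScalars_apply_eq, smul_eq_mul, zero_add,
    Ring.choose_add_natCast_sub_one] at this
  have hterm : (fun n : ℕ => Gamma (n + s) / n.factorial * x ^ n) =
      fun n => Gamma s * ((ascPochhammer ℝ n).eval s / n.factorial * x ^ n) := by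
    ext n
    rw [Gamma_nat_add_eq_mul_ascPochhammer hs, mul_div_assoc, mul_assoc]
  rwa [hterm, div_eq_mul_one_div]

theorem Finset.sum_antidiagonal_pow_div_factorial_mul {K : Type*} [Field K] [CharZero K]
    (x y : K) (n : ℕ) :
    ∑ p ∈ antidiagonal n, x ^ p.1 / p.1.factorial * (y ^ p.2 / p.2.factorial) =
      (x + y) ^ n / n.factorial := by
  rw [(Commute.all x y).add_pow', sum_div]
  refine sum_congr rfl fun p hp => ?_
  rw [HasAntidiagonal.mem_antidiagonal] at hp
  subst hp
  have : ((p.1 + p.2).factorial : K) ≠ 0 := by exact_mod_cast (p.1 + p.2).factorial_ne_zero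
  rw [nsmul_eq_mul, Nat.cast_add_choose]
  field_simp

theorem hasSum_of_hasSum_sum_antidiagonal_of_nonneg {A : Type*} [AddMonoid A] [HasAntidiagonal A]
    {f : A × A → ℝ} {a : ℝ} (hf : 0 ≤ f) (h : HasSum (fun n => ∑ p ∈ antidiagonal n, f p) a) :
    HasSum f a := by
  rw [← HasAntidiagonal.sigmaAntidiagonalEquivProd.hasSum_iff]
  have hfiber (n : A) : HasSum (fun p : antidiagonal n => f p) (∑ p ∈ antidiagonal n, f p) :=
    (antidiagonal n).hasSum f
  refine h.sigma_of_hasSum hfiber ((summable_sigma_of_nonneg fun _ => hf _).2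
    ⟨fun n => (hfiber n).summable, ?_⟩)
  convert h.summable using 2 with n
  exact (hfiber n).tsum_eq

theorem Real.hasSum_Gamma_add_add_mul_pow_div_factorial {s x y : ℝ} (hs : 0 < s) (hx : 0 ≤ x)
    (hy : 0 ≤ y) (hxy : x + y < 1) :
    HasSum (fun p : ℕ × ℕ => Gamma (p.1 + p.2 + s) * (x ^ p.1 / p.1.factorial *
      (y ^ p.2 / p.2.factorial))) (Gamma s / (1 - (x + y)) ^ s) := by
  refine hasSum_of_hasSum_sum_antidiagonal_of_nonneg
    (fun p => mul_nonneg (Gamma_pos_of_pos (by positivity)).le (by positivity)) ?_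
  have hrow (n : ℕ) : ∑ p ∈ antidiagonal n, Gamma (p.1 + p.2 + s) *
      (x ^ p.1 / p.1.factorial * (y ^ p.2 / p.2.factorial)) =
        Gamma (n + s) / n.factorial * (x + y) ^ n := by
    rw [← mul_div_right_comm, mul_div_assoc, ← sum_antidiagonal_pow_div_factorial_mul, mul_sum]
    refine sum_congr rfl fun p hp => ?_
    rw [← (HasAntidiagonal.mem_antidiagonal.mp hp), Nat.cast_add]
  simp_rw [hrow]
  exact hasSum_Gamma_nat_add_div_factorial_mul_pow
    (fun m h => by linarith [(m.cast_nonneg : (0 : ℝ) ≤ m)]) (abs_lt.mpr ⟨by linarith, hxy⟩)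

/-- The paper's `Υ(n₁, n₂, k)`. -/
noncomputable def jointLoadPMF (k ε η : ℝ) (n₁ n₂ : ℕ) : ℝ :=
  k ^ k / Gamma k * (η ^ n₂ * (1 - η) ^ n₁ / ((n₁.factorial : ℝ) * (n₂.factorial : ℝ))) *
    Gamma ((n₁ : ℝ) + (n₂ : ℝ) + k) / (ε ^ k * (1 + k / ε) ^ ((n₁ : ℝ) + (n₂ : ℝ) + k))

theorem jointLoadPMF_eq {k ε : ℝ} (hk : 0 ≤ k) (hε : 0 < ε) (η : ℝ) (n₁ n₂ : ℕ) :
    jointLoadPMF k ε η n₁ n₂ = (k / (ε + k)) ^ k / Gamma k *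
      (Gamma (n₁ + n₂ + k) * (((1 - η) * (ε / (ε + k))) ^ n₁ / n₁.factorial *
        ((η * (ε / (ε + k))) ^ n₂ / n₂.factorial))) := by
  have hεk : 0 < ε + k := by linarith
  have hbase : 1 + k / ε = (ε + k) / ε := by field_simp
  rw [jointLoadPMF, hbase, div_rpow hεk.le hε.le, div_rpow hk hεk.le]
  simp only [rpow_add hεk, rpow_add hε, rpow_natCast, mul_pow, div_pow]
  have : 0 < ε ^ k := rpow_pos_of_pos hε k
  have : 0 < (ε + k) ^ k := rpow_pos_of_pos hεk k
  field_simp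

theorem hasSum_jointLoadPMF {k ε η : ℝ} (hk : 0 < k) (hε : 0 < ε) (hη0 : 0 ≤ η) (hη1 : η ≤ 1) :
    HasSum (fun p : ℕ × ℕ => jointLoadPMF k ε η p.1 p.2) 1 := by
  have hεk : 0 < ε + k := by linarith
  have hq : 0 ≤ ε / (ε + k) := by positivity
  have hsum := (hasSum_Gamma_add_add_mul_pow_div_factorial hk (mul_nonneg (sub_nonneg.2 hη1) hq)
    (mul_nonneg hη0 hq) (by field_simp; linarith)).mul_left ((k / (ε + k)) ^ k / Gamma k)
  have hrest : 1 - ((1 - η) * (ε / (ε + k)) + η * (ε / (ε + k))) = k / (ε + k) := by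
    field_simp; ring
  have hc : (k / (ε + k)) ^ k ≠ 0 := (rpow_pos_of_pos (by positivity) k).ne'
  rw [hrest, div_mul_div_cancel₀ (Gamma_pos_of_pos hk).ne', div_self hc] at hsum
  simpa only [jointLoadPMF_eq hk.le hε] using hsum

/-- The joint load PMF Υ(n₁,n₂,3.5) sums to 1 over all (n₁,n₂) ∈ ℕ². -/
theorem stmt4 (ε η : ℝ) (hε : 0 < ε) (hη0 : 0 ≤ η) (hη1 : η ≤ 1) :
    ∑' p : ℕ × ℕ, ((3.5 : ℝ) ^ (3.5 : ℝ) / Real.Gamma 3.5 *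
        (η ^ p.2 * (1 - η) ^ p.1 / ((p.1.factorial : ℝ) * (p.2.factorial : ℝ))) *
        Real.Gamma ((p.1 : ℝ) + (p.2 : ℝ) + 3.5) /
        (ε ^ (3.5 : ℝ) * (1 + 3.5 / ε) ^ ((p.1 : ℝ) + (p.2 : ℝ) + 3.5))) = 1 :=
  (hasSum_jointLoadPMF (by norm_num) hε hη0 hη1).tsum_eq
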